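/- Fix an even integer P ≥ 4, β', γ > 0, m̄ ∈ ℝ and q̄ ∈ [0,1]. Define the replica-symmetric pressure of the hard P-spin Sherrington–Kirkpatrick model at signal m̄, overlap q, inverse temperature β' and noise β₁ by A_SK^{(P)}(m̄,q;β',β₁) := ln 2 + ⟨ln cosh((P/2)β'm̄^{P−1} + Y√((P/2)β₁²q^{P−1}))⟩_Y − ((P−1)/2)β'm̄^P + (β₁²/4)(1 − Pq^{P−1} + (P−1)q^P). Then, substituting the conjugate relation p̄ = β'q̄^{P/2}, the RS limiting pressure of the dense Hebbian network coincides with that of the hard P-spin glass at noise β'√γ: A_RS(m̄, q̄, β'q̄^{P/2}; β', γ) = A_SK^{(P)}(m̄, q̄; β', β'√γ). In particular, for P > 2 the glassy nature of the dense Hebbian network in the thermodynamic limit is exactly that of a P-spin Sherrington–Kirkpatrick model with noise level β'√γ, with no Gaussian (soft) spin-glass contribution. -/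

import Mathlib

open MeasureTheory ProbabilityTheory Real Filter

/-- Expectation of `f Y` for a standard Gaussian `Y ~ N(0,1)`. -/
noncomputable def gExp (f : ℝ → ℝ) : ℝ := ∫ y, f y ∂(gaussianReal 0 1)

/-- RS limiting pressure of the dense Hebbian network. -/
noncomputable def A_RS (P : ℕ) (β' γ mb qb pb : ℝ) : ℝ :=
  Real.log 2
    + gExp (fun Y => Real.log (Real.cosh (((P : ℝ)/2) * β' * mb ^ (P - 1)
        + Y * Real.sqrt (β' * γ * ((P : ℝ)/2) * pb * qb ^ (P/2 - 1)))))
    - (((P : ℝ) - 1)/2) * β' * mb ^ P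
    - β' * γ * ((P : ℝ)/4) * pb * qb ^ (P/2 - 1) * (1 - qb)
    + (1/4) * γ * β' ^ 2 * (1 - qb ^ P)

/-- RS pressure of the hard P-spin Sherrington–Kirkpatrick model
with signal `mb`, overlap `q`, inverse temperature `β'` and noise `β₁`. -/
noncomputable def A_SK_P (P : ℕ) (mb q β' β₁ : ℝ) : ℝ :=
  Real.log 2
    + gExp (fun Y => Real.log (Real.cosh (((P : ℝ)/2) * β' * mb ^ (P - 1)
        + Y * Real.sqrt (((P : ℝ)/2) * β₁ ^ 2 * q ^ (P - 1)))))
    - (((P : ℝ) - 1)/2) * β' * mb ^ P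
    + (β₁ ^ 2 / 4) * (1 - (P : ℝ) * q ^ (P - 1) + ((P : ℝ) - 1) * q ^ P)

/-!
On the conjugate line `p̄ = β' q̄^{P/2}` the variance of the Gaussian field of the Hebbian pressure,
`β' γ (P/2) p̄ q̄^{P/2-1}`, becomes `(P/2) β'² γ q̄^{P-1}` since `P/2 + (P/2 - 1) = P - 1` for even `P`.
With `q̄^{P-1} q̄ = q̄^P` the two energy terms recombine into
`(β'² γ / 4)(1 - P q̄^{P-1} + (P-1) q̄^P)`. Only `β₁² = β'² γ` enters, which holds for `β₁ = β' √γ`.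
-/

theorem pow_div_two_mul_pow_div_two_sub_one {M : Type*} [Monoid M] (x : M) {P : ℕ} (hP : Even P) :
    x ^ (P / 2) * x ^ (P / 2 - 1) = x ^ (P - 1) := by
  obtain ⟨k, rfl⟩ := hP
  rw [← pow_add]
  congr 1
  omega

theorem A_RS_conjugate_eq_A_SK_P {P : ℕ} (hPe : Even P) (hP₀ : P ≠ 0) (β' γ β₁ mb qb : ℝ)
    (hβ₁ : β₁ ^ 2 = β' ^ 2 * γ) :
    A_RS P β' γ mb qb (β' * qb ^ (P / 2)) = A_SK_P P mb qb β' β₁ := by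
  have hhalf := pow_div_two_mul_pow_div_two_sub_one qb hPe
  have hsucc : qb ^ (P - 1) * qb = qb ^ P := by
    rw [← pow_succ, Nat.sub_add_cancel (Nat.one_le_iff_ne_zero.mpr hP₀)]
  have hvariance : β' * γ * ((P : ℝ) / 2) * (β' * qb ^ (P / 2)) * qb ^ (P / 2 - 1)
      = ((P : ℝ) / 2) * β₁ ^ 2 * qb ^ (P - 1) := by
    rw [hβ₁, ← hhalf]
    ring
  unfold A_RS A_SK_P
  rw [hvariance, hβ₁, ← hsucc, ← hhalf]
  ring

theorem stmt9_general (P : ℕ) (hPe : Even P) (hP : 4 ≤ P) (β' γ : ℝ) (hγ : 0 < γ)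
    (mb qb : ℝ) :
    A_RS P β' γ mb qb (β' * qb ^ (P/2)) = A_SK_P P mb qb β' (β' * Real.sqrt γ) :=
  A_RS_conjugate_eq_A_SK_P hPe (by omega) β' γ _ mb qb
    (by rw [mul_pow, Real.sq_sqrt hγ.le])

theorem stmt9 (P : ℕ) (hPe : Even P) (hP : 4 ≤ P) (β' γ : ℝ) (hβ : 0 < β') (hγ : 0 < γ)
    (mb qb : ℝ) (hq : qb ∈ Set.Icc (0:ℝ) 1) :
    A_RS P β' γ mb qb (β' * qb ^ (P/2)) = A_SK_P P mb qb β' (β' * Real.sqrt γ) :=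
  stmt9_general P hPe hP β' γ hγ mb qb
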